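/- Suppose 0 < a < 1, −1 < b < 0 and −1 < c ≤ 0. Then for every n ∈ ℕ, Σ_{i=0}^n (−n)_i² (c)_i / (i! (−n−a)_i (−n−b)_i) ≤ (1+a+b+c)_n / (1+a+b)_n ≤ Σ_{i=0}^n (−n)_i (−n−1)_i (c)_i / (i! (−n−a)_i (−n−b−1)_i). -/

import Mathlib

/-!
The middle quotient is the terminating Chu–Vandermonde sum ₂F₁(−n, c; −n−a−b; 1). Its `i`-th
term and those of the two ₃F₂ sums are `Tᵢ · Gᵢ(t)` at `t = a`, `0`, `1`, where
`Tᵢ = (−n)ᵢ (c)ᵢ / (i! (−n−a)ᵢ)` is `≤ 0` for `i ≥ 1` (since `−1 < c ≤ 0`) and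
`Gᵢ(t) = (−n−t)ᵢ / (−n−b−t)ᵢ = ∏_{j<i} (n+t−j)/(n+t−j+b)` decreases in `t ≥ 0` because `b < 0`.
So the sums compare term by term.
-/

/-- Ascending Pochhammer symbol `(x)_m = ∏_{i=0}^{m-1} (x+i)`. -/
noncomputable def poch (x : ℝ) (m : ℕ) : ℝ := ∏ i ∈ Finset.range m, (x + i)

open Finset Polynomial

lemma poch_succ (x : ℝ) (m : ℕ) : poch x (m + 1) = poch x m * (x + m) :=
  prod_range_succ _ _

lemma poch_add (x : ℝ) (m k : ℕ) : poch x (m + k) = poch x m * poch (x + m) k := by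
  simp only [poch, prod_range_add, Nat.cast_add, add_assoc]

lemma poch_eq_eval_ascPochhammer (x : ℝ) (m : ℕ) : poch x m = (ascPochhammer ℝ m).eval x := by
  induction m with
  | zero => simp [poch]
  | succ m ih => rw [poch_succ, ih, ascPochhammer_succ_eval]

lemma poch_eq_smeval_descPochhammer (x : ℝ) (m : ℕ) :
    poch x m = (descPochhammer ℤ m).smeval (x + m - 1) := by
  rw [descPochhammer_smeval_eq_ascPochhammer, ascPochhammer_smeval_eq_eval,
    poch_eq_eval_ascPochhammer]
  ring_nf

lemma poch_neg (x : ℝ) (m : ℕ) : poch (-x) m = (-1) ^ m * poch (x - m + 1) m := by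
  rw [poch_eq_eval_ascPochhammer, poch_eq_eval_ascPochhammer,
    ascPochhammer_eval_neg_eq_descPochhammer, descPochhammer_eval_eq_ascPochhammer]

lemma poch_neg_natCast (n m : ℕ) : poch (-n) m = (-1) ^ m * (m.factorial * n.choose m) := by
  rw [poch_eq_eval_ascPochhammer, ascPochhammer_eval_neg_eq_descPochhammer,
    descPochhammer_eval_eq_descFactorial, Nat.descFactorial_eq_factorial_mul_choose, Nat.cast_mul]

lemma poch_pos {x : ℝ} (hx : 0 < x) (m : ℕ) : 0 < poch x m :=
  prod_pos fun i _ ↦ by positivity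

lemma poch_nonpos {c : ℝ} (hc0 : -1 < c) (hc1 : c ≤ 0) {m : ℕ} (hm : m ≠ 0) : poch c m ≤ 0 := by
  obtain ⟨k, rfl⟩ := Nat.exists_eq_add_one_of_ne_zero hm
  have h1 : poch c 1 = c := by simp [poch]
  rw [add_comm, poch_add, h1, Nat.cast_one]
  exact mul_nonpos_of_nonpos_of_nonneg hc1 (poch_pos (by linarith) k).le

lemma poch_div_poch (x y : ℝ) (m : ℕ) :
    poch x m / poch y m = ∏ j ∈ range m, (x + j) / (y + j) :=
  (prod_div_distrib _ _).symm

-- Chu–Vandermonde for falling factorials, evaluated at `-c` and `d + n - 1`.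
lemma sum_neg_one_pow_mul_choose_mul_poch (c d : ℝ) (n : ℕ) :
    ∑ i ∈ range (n + 1), (-1) ^ i * n.choose i * poch c i * poch (d + i) (n - i)
      = poch (d - c) n := by
  have h := Ring.descPochhammer_smeval_add (R := ℝ) (r := -c) (s := d + n - 1) n (Commute.all _ _)
  rw [Nat.sum_antidiagonal_eq_sum_range_succ_mk] at h
  rw [poch_eq_smeval_descPochhammer, show d - c + n - 1 = -c + (d + n - 1) by ring, h]
  refine sum_congr rfl fun i hi ↦ ?_
  have hi : i ≤ n := Nat.lt_succ_iff.mp (mem_range.mp hi)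
  rw [poch_eq_smeval_descPochhammer (d + i), Nat.cast_sub hi, ← neg_neg c, poch_neg,
    poch_eq_smeval_descPochhammer]
  ring_nf
  simp [pow_mul']

lemma sum_poch_neg_natCast_mul_poch_div (c d : ℝ) (n : ℕ) (hd : poch d n ≠ 0) :
    ∑ i ∈ range (n + 1), poch (-n) i * poch c i / (i.factorial * poch d i)
      = poch (d - c) n / poch d n := by
  rw [eq_div_iff hd, sum_mul, ← sum_neg_one_pow_mul_choose_mul_poch]
  refine sum_congr rfl fun i hi ↦ ?_
  obtain ⟨k, rfl⟩ := Nat.exists_eq_add_of_le (Nat.lt_succ_iff.mp (mem_range.mp hi))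
  rw [poch_add] at hd ⊢
  have hdi : poch d i ≠ 0 := left_ne_zero_of_mul hd
  rw [poch_neg_natCast, Nat.add_sub_cancel_left]
  field_simp

lemma poch_div_poch_antitoneOn {n i : ℕ} (hi : i ≤ n) {b : ℝ} (hb0 : -1 < b) (hb1 : b < 0) :
    AntitoneOn (fun t ↦ poch (-n - t) i / poch (-n - b - t) i) (Set.Ici 0) := by
  intro t₁ ht₁ t₂ ht₂ ht
  simp only [poch_div_poch]
  refine prod_le_prod (fun j hj ↦ ?_) fun j hj ↦ ?_
  all_goals
    have hj : (j : ℝ) + 1 ≤ n := by exact_mod_cast (mem_range.mp hj).trans_le hi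
    simp only [Set.mem_Ici] at ht₁ ht₂
  · exact div_nonneg_of_nonpos (by linarith) (by linarith)
  · rw [← neg_div_neg_eq, ← neg_div_neg_eq (_ + _), div_le_div_iff₀ (by linarith) (by linarith)]
    nlinarith

lemma poch_neg_natCast_sub (s : ℝ) (n : ℕ) : poch (-n - s) n = (-1) ^ n * poch (1 + s) n := by
  rw [show -(n : ℝ) - s = -(n + s) by ring, poch_neg]
  ring_nf

lemma poch_div_poch_eq_sum (s c : ℝ) (n : ℕ) (hs : 0 < 1 + s) :
    poch (1 + s + c) n / poch (1 + s) n
      = ∑ i ∈ range (n + 1), poch (-n) i * poch c i / (i.factorial * poch (-n - s) i) := by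
  have hd : poch (-n - s) n ≠ 0 := by
    rw [poch_neg_natCast_sub]
    exact mul_ne_zero (by simp) (poch_pos hs n).ne'
  rw [sum_poch_neg_natCast_mul_poch_div c _ n hd, sub_sub, poch_neg_natCast_sub,
    poch_neg_natCast_sub, mul_div_mul_left _ _ (by simp), add_assoc]

lemma poch_neg_natCast_sub_ne_zero {n i : ℕ} (hi : i ≤ n) {a : ℝ} (ha : 0 < a) :
    poch (-n - a) i ≠ 0 :=
  prod_ne_zero_iff.mpr fun j hj ↦ by
    have hj : (j : ℝ) + 1 ≤ n := by exact_mod_cast (mem_range.mp hj).trans_le hi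
    exact (by linarith : -(n : ℝ) - a + j < 0).ne

lemma poch_neg_natCast_div_poch_nonneg {n i : ℕ} (hi : i ≤ n) {a : ℝ} (ha : 0 ≤ a) :
    0 ≤ poch (-n) i / poch (-n - a) i := by
  rw [poch_div_poch]
  refine prod_nonneg fun j hj ↦ ?_
  have hj : (j : ℝ) + 1 ≤ n := by exact_mod_cast (mem_range.mp hj).trans_le hi
  exact div_nonneg_of_nonpos (by linarith) (by linarith)

lemma poch_term_sandwich {a b c : ℝ} (ha0 : 0 < a) (ha1 : a < 1) (hb0 : -1 < b) (hb1 : b < 0)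
    (hc0 : -1 < c) (hc1 : c ≤ 0) {n i : ℕ} (hi : i ≤ n) :
    poch (-n) i ^ 2 * poch c i / (i.factorial * poch (-n - a) i * poch (-n - b) i)
        ≤ poch (-n) i * poch c i / (i.factorial * poch (-n - a - b) i) ∧
      poch (-n) i * poch c i / (i.factorial * poch (-n - a - b) i)
        ≤ poch (-n) i * poch (-n - 1) i * poch c i /
            (i.factorial * poch (-n - a) i * poch (-n - b - 1) i) := by
  rcases Nat.eq_zero_or_pos i with rfl | hi0
  · simp [poch]
  set T := poch (-n) i / poch (-n - a) i * (poch c i / i.factorial)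
  set G := fun t : ℝ ↦ poch (-n - t) i / poch (-n - b - t) i
  have hT : T ≤ 0 := mul_nonpos_of_nonneg_of_nonpos (poch_neg_natCast_div_poch_nonneg hi ha0.le)
    (div_nonpos_of_nonpos_of_nonneg (poch_nonpos hc0 hc1 hi0.ne') (by positivity))
  have ha : poch (-n - a) i ≠ 0 := poch_neg_natCast_sub_ne_zero hi ha0
  have hG := poch_div_poch_antitoneOn hi hb0 hb1
  have lower : poch (-n) i ^ 2 * poch c i / (i.factorial * poch (-n - a) i * poch (-n - b) i)
      = T * G 0 := by
    simp only [T, G, sub_zero]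
    ring
  have mid : poch (-n) i * poch c i / (i.factorial * poch (-n - a - b) i) = T * G a := by
    simp only [T, G, sub_right_comm _ b a]
    field_simp
  have upper : poch (-n) i * poch (-n - 1) i * poch c i /
      (i.factorial * poch (-n - a) i * poch (-n - b - 1) i) = T * G 1 := by
    simp only [T, G]
    ring
  rw [lower, mid, upper]
  exact ⟨mul_le_mul_of_nonpos_left (hG Set.self_mem_Ici ha0.le ha0.le) hT,
    mul_le_mul_of_nonpos_left (hG ha0.le (Set.mem_Ici.mpr zero_le_one) ha1.le) hT⟩

/-- For 0 < a < 1, −1 < b < 0, −1 < c ≤ 0 and every n ∈ ℕ,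
₃F₂(−n,−n,c;−n−a,−n−b;1) ≤ (1+a+b+c)_n/(1+a+b)_n ≤ ₃F₂(−n,−n−1,c;−n−a,−n−b−1;1). -/
theorem statement4 (a b c : ℝ) (ha0 : 0 < a) (ha1 : a < 1) (hb0 : -1 < b) (hb1 : b < 0)
    (hc0 : -1 < c) (hc1 : c ≤ 0) (n : ℕ) :
    (∑ i ∈ Finset.range (n + 1),
        (poch (-(n:ℝ)) i) ^ 2 * poch c i /
          ((i.factorial : ℝ) * poch (-(n:ℝ) - a) i * poch (-(n:ℝ) - b) i))
      ≤ poch (1 + a + b + c) n / poch (1 + a + b) n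
    ∧ poch (1 + a + b + c) n / poch (1 + a + b) n
      ≤ ∑ i ∈ Finset.range (n + 1),
          poch (-(n:ℝ)) i * poch (-(n:ℝ) - 1) i * poch c i /
            ((i.factorial : ℝ) * poch (-(n:ℝ) - a) i * poch (-(n:ℝ) - b - 1) i) := by
  have hmid := poch_div_poch_eq_sum (a + b) c n (by linarith)
  simp only [← add_assoc, ← sub_sub] at hmid
  have hterm := fun i (hi : i ∈ range (n + 1)) ↦
    poch_term_sandwich ha0 ha1 hb0 hb1 hc0 hc1 (Nat.lt_succ_iff.mp (mem_range.mp hi))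
  rw [hmid]
  exact ⟨sum_le_sum fun i hi ↦ (hterm i hi).1, sum_le_sum fun i hi ↦ (hterm i hi).2⟩
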